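/- Let p be an odd prime and let G be a finite p-group of nilpotency class two with G' = Z(G). For i = 1, 2 let Δᵢ be a bilinear form on G with associated circle operation ∘ᵢ, and let θᵢ: G → G be a bijection with θᵢ(x·y) = θᵢ(x) ∘ᵢ θᵢ(y) for all x, y ∈ G. Define Δ: G × G → G' by Δ(x, y) = θ₂(Δ₁(θ₂⁻¹(x), θ₂⁻¹(y)))·Δ₂(x, y). Then Δ is a bilinear form on G, and the composite map θ: G → G, θ(x) = θ₂(θ₁(x)), satisfies θ(x·y) = θ(x)·θ(y)·Δ(θ(x), θ(y)) for all x, y ∈ G; that is, θ is an isomorphism from G onto the group (G, ∘) for the circle operation ∘ associated to Δ. -/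

import Mathlib

/-- The commutator `[x, y] = x⁻¹ * y⁻¹ * x * y` in the paper's convention. -/
def pcomm {G : Type*} [Group G] (x y : G) : G := x⁻¹ * y⁻¹ * x * y

open scoped commutatorElement in
theorem pcomm_mem_commutator {G : Type*} [Group G] (x y : G) :
    pcomm x y ∈ commutator G := by
  have h : pcomm x y = ⁅x⁻¹, y⁻¹⁆ := by
    simp [pcomm, commutatorElement_def, mul_assoc]
  rw [h]
  exact Subgroup.commutator_mem_commutator (Subgroup.mem_top _) (Subgroup.mem_top _)

/-- A bilinear form on a group `G` of class two with `G' = Z(G)`: a map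
`Δ : G/G' × G/G' → G'` which is multiplicative in each variable. -/
def IsBilinearForm {G : Type*} [Group G] (Δ : G → G → G) : Prop :=
  (∀ x y : G, Δ x y ∈ commutator G) ∧
  (∀ x y w : G, w ∈ commutator G → Δ (x * w) y = Δ x y) ∧
  (∀ x y w : G, w ∈ commutator G → Δ x (y * w) = Δ x y) ∧
  (∀ x₁ x₂ y : G, Δ (x₁ * x₂) y = Δ x₁ y * Δ x₂ y) ∧
  (∀ x y₁ y₂ : G, Δ x (y₁ * y₂) = Δ x y₁ * Δ x y₂)

/-- The circle operation `x ∘ y = x·y·Δ(x, y)` associated to a bilinear form `Δ`. -/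
def circ {G : Type*} [Group G] (Δ : G → G → G) (x y : G) : G := x * y * Δ x y

/-- The circle inverse `x^{⊖1} = x⁻¹·Δ(x, x)`. -/
def oinv {G : Type*} [Group G] (Δ : G → G → G) (x : G) : G := x⁻¹ * Δ x x

/-- The circle commutator `[x, y]_∘ = x^{⊖1} ∘ y^{⊖1} ∘ x ∘ y`. -/
def ocomm {G : Type*} [Group G] (Δ : G → G → G) (x y : G) : G :=
  circ Δ (circ Δ (circ Δ (oinv Δ x) (oinv Δ y)) x) y

/-!
Both claims reduce to one observation: a bijection `θ : G → (G, ∘)` agrees with a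
homomorphism modulo `G'`, so it maps `G'` into itself (onto it, `G` being finite) and
`θ(a·w) = θ(a)·θ(w)` for `w ∈ G'`. Hence `x, y ↦ θ₂(Δ₁(θ₂⁻¹x, θ₂⁻¹y))` is again
bilinear, and a product of bilinear forms is bilinear because `G'` is central.
Applying `θ₂` to `θ₁(xy) = θ₁x·θ₁y·Δ₁(θ₁x, θ₁y)` then gives the identity for `θ₂θ₁`.
-/

namespace IsBilinearForm

variable {G : Type*} [Group G] {Δ : G → G → G}

theorem map_one_right (hΔ : IsBilinearForm Δ) (x : G) : Δ x 1 = 1 := by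
  simpa using (hΔ.2.2.2.2 x 1 1).symm

theorem eq_one_of_mem_right (hΔ : IsBilinearForm Δ) (x : G) {w : G}
    (hw : w ∈ commutator G) : Δ x w = 1 := by
  simpa [hΔ.map_one_right] using hΔ.2.2.1 x 1 w hw

theorem mul {Δ' : G → G → G} (hΔ : IsBilinearForm Δ) (hΔ' : IsBilinearForm Δ')
    (hcen : commutator G ≤ Subgroup.center G) :
    IsBilinearForm (fun x y => Δ x y * Δ' x y) := by
  have hcomm : ∀ x y g : G, Commute g (Δ' x y) := fun x y g =>
    Subgroup.mem_center_iff.mp (hcen (hΔ'.1 x y)) g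
  refine ⟨fun x y => mul_mem (hΔ.1 x y) (hΔ'.1 x y), fun x y w hw => ?_,
    fun x y w hw => ?_, fun x₁ x₂ y => ?_, fun x y₁ y₂ => ?_⟩
  · simp only [hΔ.2.1 x y w hw, hΔ'.2.1 x y w hw]
  · simp only [hΔ.2.2.1 x y w hw, hΔ'.2.2.1 x y w hw]
  · simp only [hΔ.2.2.2.1, hΔ'.2.2.2.1, (hcomm x₁ y _).symm.mul_mul_mul_comm]
  · simp only [hΔ.2.2.2.2, hΔ'.2.2.2.2, (hcomm x y₁ _).symm.mul_mul_mul_comm]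

section CircHom

variable (hΔ : IsBilinearForm Δ) {θ : G ≃ G}
  (hθ : ∀ x y : G, θ (x * y) = circ Δ (θ x) (θ y))
include hΔ hθ

theorem map_mem_commutator {w : G} (hw : w ∈ commutator G) : θ w ∈ commutator G := by
  have hof : ∀ {z : G}, Abelianization.of z = 1 ↔ z ∈ commutator G := by
    intro z
    rw [← Abelianization.ker_of, MonoidHom.mem_ker]
  let f : G →* Abelianization G := MonoidHom.mk' (fun x => Abelianization.of (θ x)) fun x y => by
    rw [hθ, circ, map_mul, map_mul, hof.mpr (hΔ.1 (θ x) (θ y)), mul_one]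
  exact hof.mp (Abelianization.commutator_subset_ker f hw)

theorem map_mul_of_mem (a : G) {w : G} (hw : w ∈ commutator G) : θ (a * w) = θ a * θ w := by
  rw [hθ, circ, hΔ.eq_one_of_mem_right _ (hΔ.map_mem_commutator hθ hw), mul_one]

variable [Finite G]

theorem symm_mem_commutator {w : G} (hw : w ∈ commutator G) : θ.symm w ∈ commutator G := by
  let θ' : commutator G → commutator G := fun c => ⟨θ c, hΔ.map_mem_commutator hθ c.2⟩
  have hθ' : Function.Injective θ' := fun c d hcd =>
    Subtype.ext (θ.injective (congrArg Subtype.val hcd))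
  obtain ⟨c, hc⟩ := Finite.surjective_of_injective hθ' ⟨w, hw⟩
  have hcw : θ c = w := congrArg Subtype.val hc
  rw [← hcw, Equiv.symm_apply_apply]
  exact c.2

theorem symm_mul_of_mem (a : G) {w : G} (hw : w ∈ commutator G) :
    θ.symm (a * w) = θ.symm a * θ.symm w := by
  apply θ.injective
  rw [hΔ.map_mul_of_mem hθ _ (hΔ.symm_mem_commutator hθ hw)]
  simp only [Equiv.apply_symm_apply]

theorem symm_mul (x y : G) :
    θ.symm (x * y) = θ.symm x * θ.symm y * (θ.symm (Δ x y))⁻¹ := by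
  have hxy : θ.symm x * θ.symm y = θ.symm (x * y) * θ.symm (Δ x y) := by
    rw [← hΔ.symm_mul_of_mem hθ _ (hΔ.1 x y), θ.eq_symm_apply, hθ]
    simp only [circ, Equiv.apply_symm_apply]
  rw [hxy, mul_inv_cancel_right]

theorem transport {Δ' : G → G → G} (hΔ' : IsBilinearForm Δ') :
    IsBilinearForm (fun x y => θ (Δ' (θ.symm x) (θ.symm y))) := by
  have hsymm : ∀ {w : G}, w ∈ commutator G → θ.symm w ∈ commutator G :=
    hΔ.symm_mem_commutator hθ
  have hinv : ∀ x y : G, (θ.symm (Δ x y))⁻¹ ∈ commutator G := fun x y =>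
    inv_mem (hsymm (hΔ.1 x y))
  refine ⟨fun x y => hΔ.map_mem_commutator hθ (hΔ'.1 _ _), fun x y w hw => ?_,
    fun x y w hw => ?_, fun x₁ x₂ y => ?_, fun x y₁ y₂ => ?_⟩
  · simp only [hΔ.symm_mul_of_mem hθ x hw, hΔ'.2.1 _ _ _ (hsymm hw)]
  · simp only [hΔ.symm_mul_of_mem hθ y hw, hΔ'.2.2.1 _ _ _ (hsymm hw)]
  · dsimp only
    rw [hΔ.symm_mul hθ, hΔ'.2.1 _ _ _ (hinv _ _), hΔ'.2.2.2.1,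
      hΔ.map_mul_of_mem hθ _ (hΔ'.1 _ _)]
  · dsimp only
    rw [hΔ.symm_mul hθ, hΔ'.2.2.1 _ _ _ (hinv _ _), hΔ'.2.2.2.2,
      hΔ.map_mul_of_mem hθ _ (hΔ'.1 _ _)]

end CircHom

end IsBilinearForm

theorem stmt_16_general
    {G : Type*} [Group G] [Fintype G]
    (hGZ : commutator G = Subgroup.center G)
    (Δ₁ Δ₂ : G → G → G) (hΔ₁ : IsBilinearForm Δ₁) (hΔ₂ : IsBilinearForm Δ₂)
    (θ₁ θ₂ : G ≃ G)
    (hθ₁ : ∀ x y : G, θ₁ (x * y) = circ Δ₁ (θ₁ x) (θ₁ y))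
    (hθ₂ : ∀ x y : G, θ₂ (x * y) = circ Δ₂ (θ₂ x) (θ₂ y)) :
    IsBilinearForm (fun x y : G => θ₂ (Δ₁ (θ₂.symm x) (θ₂.symm y)) * Δ₂ x y) ∧
    ∀ x y : G, θ₂ (θ₁ (x * y)) =
      circ (fun x y : G => θ₂ (Δ₁ (θ₂.symm x) (θ₂.symm y)) * Δ₂ x y)
        (θ₂ (θ₁ x)) (θ₂ (θ₁ y)) := by
  refine ⟨(hΔ₂.transport hθ₂ hΔ₁).mul hΔ₂ hGZ.le, fun x y => ?_⟩
  have hcomm : Commute (Δ₂ (θ₂ (θ₁ x)) (θ₂ (θ₁ y))) (θ₂ (Δ₁ (θ₁ x) (θ₁ y))) :=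
    (Subgroup.mem_center_iff.mp (hGZ ▸ hΔ₂.1 _ _) _).symm
  rw [hθ₁, circ, hΔ₂.map_mul_of_mem hθ₂ _ (hΔ₁.1 _ _), hθ₂]
  simp only [circ, Equiv.symm_apply_apply, mul_assoc, hcomm.eq]

/-- if `θᵢ : G → (G, ∘ᵢ)` are isomorphisms for bilinear forms `Δᵢ`
(`i = 1, 2`), then `Δ(x, y) = θ₂(Δ₁(θ₂⁻¹(x), θ₂⁻¹(y)))·Δ₂(x, y)` is a bilinear form,
and `θ₁θ₂` is an isomorphism from `G` onto the circle group associated to `Δ`. -/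
theorem stmt_16 {p : ℕ} (hp : p.Prime) (hodd : Odd p)
    {G : Type*} [Group G] [Fintype G] (hpG : IsPGroup p G)
    (hc2 : (⊤ : Subgroup G).lowerCentralSeries 2 = ⊥) (hc1 : (⊤ : Subgroup G).lowerCentralSeries 1 ≠ ⊥)
    (hGZ : commutator G = Subgroup.center G)
    (Δ₁ Δ₂ : G → G → G) (hΔ₁ : IsBilinearForm Δ₁) (hΔ₂ : IsBilinearForm Δ₂)
    (θ₁ θ₂ : G ≃ G)
    (hθ₁ : ∀ x y : G, θ₁ (x * y) = circ Δ₁ (θ₁ x) (θ₁ y))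
    (hθ₂ : ∀ x y : G, θ₂ (x * y) = circ Δ₂ (θ₂ x) (θ₂ y)) :
    IsBilinearForm (fun x y : G => θ₂ (Δ₁ (θ₂.symm x) (θ₂.symm y)) * Δ₂ x y) ∧
    ∀ x y : G, θ₂ (θ₁ (x * y)) =
      circ (fun x y : G => θ₂ (Δ₁ (θ₂.symm x) (θ₂.symm y)) * Δ₂ x y)
        (θ₂ (θ₁ x)) (θ₂ (θ₁ y)) :=
  stmt_16_general hGZ Δ₁ Δ₂ hΔ₁ hΔ₂ θ₁ θ₂ hθ₁ hθ₂
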